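/- Let g be a finite-dimensional nilpotent real Lie algebra that admits a cyclic Minkowski norm F. Then g is abelian. Equivalently, non-Abelian nilpotent Lie groups do not admit cyclic left-invariant Finsler metrics. -/

import Mathlib

/-!
If `𝔤` is nilpotent and not abelian, the last nonzero term of its lower central series is
central and lies in `[𝔤, 𝔤]`; pick `y ≠ 0` there. In the cyclic identity at `y` the two terms
containing a bracket with `y` vanish, so `g_y([u, v], y) = 0` for all `u, v`. Hence the linear
form `g_y(·, y)` kills `[𝔤, 𝔤] ∋ y`, contradicting `g_y(y, y) > 0`.
-/

noncomputable section

/-- The fundamental tensor `g_y(u,v) = (1/2)·∂²/∂s∂t|_{s=t=0} F(y+su+tv)²`. -/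
def gTensor {V : Type*} [NormedAddCommGroup V] [NormedSpace ℝ V]
    (F : V → ℝ) (y u v : V) : ℝ :=
  (1 / 2) * deriv (fun s : ℝ => deriv (fun t : ℝ => (F (y + s • u + t • v)) ^ 2) 0) 0

/-- The Cartan tensor `C_y(u,v,w) = (1/2)·d/dt|_{t=0} g_{y+tw}(u,v)`. -/
def cartanTensor {V : Type*} [NormedAddCommGroup V] [NormedSpace ℝ V]
    (F : V → ℝ) (y u v w : V) : ℝ :=
  (1 / 2) * deriv (fun t : ℝ => gTensor F (y + t • w) u v) 0

/-- `F` is a Minkowski norm: positive and smooth away from `0`, positively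
homogeneous of degree one, with positive-definite symmetric bilinear fundamental tensor. -/
structure IsMinkowskiNorm {V : Type*} [NormedAddCommGroup V] [NormedSpace ℝ V]
    (F : V → ℝ) : Prop where
  pos : ∀ y : V, y ≠ 0 → 0 < F y
  smooth : ContDiffOn ℝ (⊤ : ℕ∞) F {(0 : V)}ᶜ
  homog : ∀ c : ℝ, 0 < c → ∀ y : V, F (c • y) = c * F y
  g_symm : ∀ y : V, y ≠ 0 → ∀ u v : V, gTensor F y u v = gTensor F y v u
  g_add_left : ∀ y : V, y ≠ 0 → ∀ u u' v : V,
    gTensor F y (u + u') v = gTensor F y u v + gTensor F y u' v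
  g_smul_left : ∀ y : V, y ≠ 0 → ∀ (c : ℝ) (u v : V),
    gTensor F y (c • u) v = c * gTensor F y u v
  g_posdef : ∀ y : V, y ≠ 0 → ∀ u : V, u ≠ 0 → 0 < gTensor F y u u

/-- A Lie algebra structure on the real vector space `V`, given as a bilinear map. -/
structure IsLieBracket {V : Type*} [AddCommGroup V] [Module ℝ V]
    (L : V →ₗ[ℝ] V →ₗ[ℝ] V) : Prop where
  alternate : ∀ x : V, L x x = 0
  jacobi : ∀ x y z : V, L x (L y z) = L (L x y) z + L y (L x z)

/-- The cyclic condition for a Minkowski norm on a Lie algebra. -/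
def IsCyclicNorm {V : Type*} [NormedAddCommGroup V] [NormedSpace ℝ V]
    (L : V →ₗ[ℝ] V →ₗ[ℝ] V) (F : V → ℝ) : Prop :=
  ∀ y : V, y ≠ 0 → ∀ x z : V,
    gTensor F y (L x y) z + gTensor F y (L y z) x + gTensor F y (L z x) y = 0

/-- The Riemann curvature `R_y(u) = D_η N(y,u) − N(y,N(y,u)) + N(y,[y,u]) − [y,N(y,u)]`. -/
def RiemannCurv {V : Type*} [NormedAddCommGroup V] [NormedSpace ℝ V]
    (L : V →ₗ[ℝ] V →ₗ[ℝ] V) (η : V → V) (N : V → V → V) (y u : V) : V :=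
  fderiv ℝ (fun z => N z u) y (η y) - N y (N y u) + N y (L y u) - L y (N y u)

/-- Projection onto `m` along `h` in the decomposition `g = h ⊕ m`. -/
def projTo {V : Type*} [AddCommGroup V] [Module ℝ V] (h m : Submodule ℝ V)
    (hcompl : IsCompl h m) : V →ₗ[ℝ] m :=
  m.linearProjOfIsCompl h hcompl.symm

/-- The inner product making the basis `e` orthonormal. -/
def basisInner {V : Type*} [AddCommGroup V] [Module ℝ V] {ι : Type*} [Fintype ι]
    (e : Module.Basis ι ℝ V) (x y : V) : ℝ :=
  ∑ k, e.repr x k * e.repr y k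


/-- The lower central series of the Lie bracket `L`. -/
def lcsOf {V : Type*} [AddCommGroup V] [Module ℝ V]
    (L : V →ₗ[ℝ] V →ₗ[ℝ] V) : ℕ → Submodule ℝ V
  | 0 => ⊤
  | k + 1 => Submodule.span ℝ {z | ∃ x : V, ∃ y ∈ lcsOf L k, z = L x y}

section LowerCentralSeries

variable {V : Type*} [AddCommGroup V] [Module ℝ V] (L : V →ₗ[ℝ] V →ₗ[ℝ] V)

theorem apply_mem_lcsOf_succ {n : ℕ} (z : V) {x : V} (hx : x ∈ lcsOf L n) :
    L z x ∈ lcsOf L (n + 1) :=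
  Submodule.subset_span ⟨z, x, hx, rfl⟩

theorem apply_mem_lcsOf_one (z x : V) : L z x ∈ lcsOf L 1 :=
  apply_mem_lcsOf_succ L (n := 0) z Submodule.mem_top

theorem lcsOf_succ_le (n : ℕ) : lcsOf L (n + 1) ≤ lcsOf L n := by
  induction n with
  | zero => exact le_top
  | succ n ih =>
    refine Submodule.span_le.2 ?_
    rintro _ ⟨z, x, hx, rfl⟩
    exact apply_mem_lcsOf_succ L z (ih hx)

theorem lcsOf_antitone : Antitone (lcsOf L) :=
  antitone_nat_of_succ_le (lcsOf_succ_le L)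

theorem lcsOf_one_le_ker {W : Type*} [AddCommGroup W] [Module ℝ W] {φ : V →ₗ[ℝ] W}
    (hφ : ∀ u v, φ (L u v) = 0) : lcsOf L 1 ≤ LinearMap.ker φ := by
  refine Submodule.span_le.2 ?_
  rintro _ ⟨u, v, -, rfl⟩
  exact hφ u v

theorem exists_central_ne_zero_mem_lcsOf_one {k : ℕ} (hk : lcsOf L k = ⊥)
    (h1 : lcsOf L 1 ≠ ⊥) : ∃ x, x ≠ 0 ∧ x ∈ lcsOf L 1 ∧ ∀ z, L z x = 0 := by
  classical
  have hex : ∃ n, lcsOf L (n + 1) = ⊥ := ⟨k, eq_bot_iff.2 (hk ▸ lcsOf_succ_le L k)⟩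
  have hlast : lcsOf L (Nat.find hex + 1) = ⊥ := Nat.find_spec hex
  obtain ⟨m, hm⟩ : ∃ m, Nat.find hex = m + 1 :=
    Nat.exists_eq_succ_of_ne_zero fun h => h1 (by rwa [h] at hlast)
  have hne : lcsOf L (m + 1) ≠ ⊥ := Nat.find_min hex (by omega)
  obtain ⟨x, hx, hx0⟩ := Submodule.exists_mem_ne_zero_of_ne_bot hne
  refine ⟨x, hx0, lcsOf_antitone L (by omega) hx, fun z => ?_⟩
  have hzx := apply_mem_lcsOf_succ L z hx
  rwa [← hm, hlast, Submodule.mem_bot] at hzx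

end LowerCentralSeries

theorem IsLieBracket.skew {V : Type*} [AddCommGroup V] [Module ℝ V]
    {L : V →ₗ[ℝ] V →ₗ[ℝ] V} (hL : IsLieBracket L) (u v : V) : L u v = -L v u := by
  have h := hL.alternate (u + v)
  simp only [map_add, LinearMap.add_apply, hL.alternate, zero_add, add_zero] at h
  exact eq_neg_of_add_eq_zero_right h

namespace IsMinkowskiNorm

variable {V : Type*} [NormedAddCommGroup V] [NormedSpace ℝ V] {F : V → ℝ}

def gTensorLeft (hF : IsMinkowskiNorm F) {y : V} (hy : y ≠ 0) (v : V) : V →ₗ[ℝ] ℝ where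
  toFun u := gTensor F y u v
  map_add' u u' := hF.g_add_left y hy u u' v
  map_smul' c u := hF.g_smul_left y hy c u v

theorem gTensor_zero_left (hF : IsMinkowskiNorm F) {y : V} (hy : y ≠ 0) (v : V) :
    gTensor F y 0 v = 0 :=
  (hF.gTensorLeft hy v).map_zero

theorem gTensor_bracket_self_eq_zero_of_central {L : V →ₗ[ℝ] V →ₗ[ℝ] V} (hL : IsLieBracket L)
    (hF : IsMinkowskiNorm F) (hcyc : IsCyclicNorm L F) {y : V} (hy : y ≠ 0)
    (hcent : ∀ z, L z y = 0) (u v : V) : gTensor F y (L u v) y = 0 := by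
  have h := hcyc y hy v u
  rwa [hcent v, hL.skew y u, hcent u, neg_zero, hF.gTensor_zero_left hy,
    hF.gTensor_zero_left hy, zero_add, zero_add] at h

end IsMinkowskiNorm

theorem nilpotent_cyclic_implies_abelian_general
    {g : Type*} [NormedAddCommGroup g] [NormedSpace ℝ g]
    (L : g →ₗ[ℝ] g →ₗ[ℝ] g) (hL : IsLieBracket L)
    (hnilp : ∃ k : ℕ, lcsOf L k = ⊥)
    (F : g → ℝ) (hF : IsMinkowskiNorm F) (hcyc : IsCyclicNorm L F) :
    ∀ x y : g, L x y = 0 := by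
  intro a b
  by_contra hab
  have h1 : lcsOf L 1 ≠ ⊥ := fun h =>
    hab ((Submodule.mem_bot ℝ).1 (h ▸ apply_mem_lcsOf_one L a b))
  obtain ⟨k, hk⟩ := hnilp
  obtain ⟨y, hy0, hy1, hcent⟩ := exists_central_ne_zero_mem_lcsOf_one L hk h1
  have hker := lcsOf_one_le_ker L (φ := hF.gTensorLeft hy0 y)
    (hF.gTensor_bracket_self_eq_zero_of_central hL hcyc hy0 hcent) hy1
  exact (hF.g_posdef y hy0 y hy0).ne' hker

/-- A finite-dimensional nilpotent real Lie algebra admitting a cyclic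
Minkowski norm is abelian; equivalently, non-Abelian nilpotent Lie groups do not admit
cyclic left-invariant Finsler metrics. -/
theorem nilpotent_cyclic_implies_abelian
    {g : Type*} [NormedAddCommGroup g] [NormedSpace ℝ g] [FiniteDimensional ℝ g]
    (L : g →ₗ[ℝ] g →ₗ[ℝ] g) (hL : IsLieBracket L)
    (hnilp : ∃ k : ℕ, lcsOf L k = ⊥)
    (F : g → ℝ) (hF : IsMinkowskiNorm F) (hcyc : IsCyclicNorm L F) :
    ∀ x y : g, L x y = 0 :=
  nilpotent_cyclic_implies_abelian_general L hL hnilp F hF hcyc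

end
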